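/- arXiv:1901.01417 — 8 statements merged into one kernel-verified Lean document; each statement's English description precedes it below -/
import Mathlib

section
/- For each integer b with 0 ≤ b < n-1, the point p(b) := ( (Σ_{t=1}^d ⌈ bλ_t/(n-1) ⌉) - b , ⌈ bλ_1/(n-1) ⌉ , … , ⌈ bλ_d/(n-1) ⌉ ) lies in Π_λ ∩ ℤ^{d+1}, and every lattice point of Π_λ equals p(b) for exactly one integer b with 0 ≤ b < n-1. -/
/-- For each integer `b` with `0 ≤ b < n-1`, the point
`p(b) = ((Σ_t ⌈bλ_t/(n-1)⌉) - b, ⌈bλ_1/(n-1)⌉, …, ⌈bλ_d/(n-1)⌉)` lies in `Π_λ ∩ ℤ^{d+1}`,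
and every lattice point of `Π_λ` equals `p(b)` for exactly one integer `b` with `0 ≤ b < n-1`. -/
theorem stmt_1 (d : ℕ) (hd : 1 ≤ d) (lam : Fin d → ℕ) (hpos : ∀ t, 0 < lam t)
    (n : ℕ) (hn : ∑ t, lam t = n) (hn3 : 3 ≤ n)
    (p : ℤ → Fin (d + 1) → ℤ)
    (hp : ∀ b : ℤ, p b = Fin.cons
      ((∑ t, ⌈(b * lam t : ℚ) / ((n : ℚ) - 1)⌉) - b)
      (fun t => ⌈(b * lam t : ℚ) / ((n : ℚ) - 1)⌉))
    (Pi : Set (Fin (d + 1) → ℝ))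
    (hPi : Pi = { z | ∃ γ : Fin d → ℝ, ∃ c : ℝ,
      (∀ t, 0 ≤ γ t ∧ γ t < 1) ∧ 0 ≤ c ∧ c < 1 ∧
      z = (∑ t, γ t • (Fin.cons 1 (fun s => if s = t then (1 : ℝ) else 0) : Fin (d + 1) → ℝ))
          + c • (Fin.cons 1 (fun s => (lam s : ℝ)) : Fin (d + 1) → ℝ) }) :
    (∀ b : ℤ, 0 ≤ b → b < (n : ℤ) - 1 → (fun s => (p b s : ℝ)) ∈ Pi) ∧
    (∀ y : Fin (d + 1) → ℤ, (fun s => (y s : ℝ)) ∈ Pi →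
      ∃! b : ℤ, 0 ≤ b ∧ b < (n : ℤ) - 1 ∧ p b = y) := by
  have hnR : (3:ℝ) ≤ (n:ℝ) := by exact_mod_cast hn3
  have hnQ : (3:ℚ) ≤ (n:ℚ) := by exact_mod_cast hn3
  have hneR : ((n:ℝ) - 1) ≠ 0 := by linarith
  have hposR : (0:ℝ) < (n:ℝ) - 1 := by linarith
  have hneQ : ((n:ℚ) - 1) ≠ 0 := by linarith
  have coord0 : ∀ (γ : Fin d → ℝ) (c : ℝ),
      ((∑ t, γ t • (Fin.cons 1 (fun s => if s = t then (1 : ℝ) else 0) : Fin (d + 1) → ℝ))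
          + c • (Fin.cons 1 (fun s => (lam s : ℝ)) : Fin (d + 1) → ℝ)) 0
      = (∑ t, γ t) + c := by
    intro γ c
    simp [Finset.sum_apply]
  have coordS : ∀ (γ : Fin d → ℝ) (c : ℝ) (u : Fin d),
      ((∑ t, γ t • (Fin.cons 1 (fun s => if s = t then (1 : ℝ) else 0) : Fin (d + 1) → ℝ))
          + c • (Fin.cons 1 (fun s => (lam s : ℝ)) : Fin (d + 1) → ℝ)) u.succ
      = γ u + c * lam u := by
    intro γ c u
    simp [Finset.sum_apply, Fin.cons_succ, mul_ite]
  constructor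
  · intro b hb0 hb1
    rw [hPi]
    set q : Fin d → ℚ := fun t => (b * lam t : ℚ) / ((n : ℚ) - 1) with hq
    refine ⟨fun t => (((⌈q t⌉ : ℚ) - q t : ℚ) : ℝ), (b:ℝ)/((n:ℝ)-1), ?_, ?_, ?_, ?_⟩
    · intro t
      constructor
      · show (0:ℝ) ≤ (((⌈q t⌉ : ℚ) - q t : ℚ) : ℝ)
        have := Int.le_ceil (q t)
        have h : (0:ℚ) ≤ (⌈q t⌉ : ℚ) - q t := by linarith
        exact_mod_cast h
      · show ((((⌈q t⌉ : ℚ) - q t : ℚ)) : ℝ) < 1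
        have := Int.ceil_lt_add_one (q t)
        have h : ((⌈q t⌉ : ℚ) - q t : ℚ) < 1 := by linarith
        exact_mod_cast h
    · positivity
    · rw [div_lt_one hposR]
      exact_mod_cast hb1
    · funext s
      induction s using Fin.cases with
      | zero =>
        show ((p b 0 : ℤ) : ℝ) = _
        rw [coord0, hp b]
        simp only [Fin.cons_zero]
        have hsum : ∑ t, ((((⌈q t⌉ : ℚ) - q t : ℚ)) : ℝ)
            = (∑ t, ((⌈q t⌉ : ℤ) : ℝ)) - (b:ℝ) * n / ((n:ℝ)-1) := by
          have h1 : ∀ t, ((((⌈q t⌉ : ℚ) - q t : ℚ)) : ℝ)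
              = ((⌈q t⌉ : ℤ) : ℝ) - ((b:ℝ) * (lam t : ℝ)) / ((n:ℝ)-1) := by
            intro t; rw [hq]; push_cast; ring
          rw [Finset.sum_congr rfl (fun t _ => h1 t), Finset.sum_sub_distrib,
            ← Finset.sum_div, ← Finset.mul_sum]
          have h2 : ∑ t, (lam t : ℝ) = (n : ℝ) := by
            exact_mod_cast congrArg (Nat.cast : ℕ → ℝ) hn
          rw [h2]
        rw [hsum]
        push_cast
        field_simp
        ring
      | succ u =>
        show ((p b u.succ : ℤ) : ℝ) = _
        rw [coordS, hp b]
        simp only [Fin.cons_succ]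
        show ((⌈q u⌉ : ℤ) : ℝ)
            = ((((⌈q u⌉ : ℚ) - q u : ℚ)) : ℝ) + (b:ℝ)/((n:ℝ)-1) * (lam u : ℝ)
        have h3 : ((q u : ℚ) : ℝ) = (b:ℝ) * (lam u : ℝ) / ((n:ℝ)-1) := by
          rw [hq]; push_cast; ring
        push_cast [h3]
        field_simp
        ring
  · intro y hy
    rw [hPi] at hy
    obtain ⟨γ, c, hγ, hc0, hc1, hz⟩ := hy
    have h0 : (y 0 : ℝ) = (∑ t, γ t) + c := by
      have := congrFun hz 0
      rw [coord0] at this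
      exact this
    have hS : ∀ u : Fin d, (y u.succ : ℝ) = γ u + c * lam u := by
      intro u
      have := congrFun hz u.succ
      rw [coordS] at this
      exact this
    set b : ℤ := (∑ u : Fin d, y u.succ) - y 0 with hb
    have hcb : (b:ℝ) = c * ((n:ℝ) - 1) := by
      have hs : (∑ u : Fin d, ((y u.succ : ℤ) : ℝ)) = (∑ u : Fin d, γ u) + c * (n:ℝ) := by
        rw [Finset.sum_congr rfl (fun u _ => hS u), Finset.sum_add_distrib,
          ← Finset.mul_sum]
        congr 2
        exact_mod_cast congrArg (Nat.cast : ℕ → ℝ) hn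
      rw [hb]
      push_cast
      rw [hs, h0]
      ring
    have hcval : c = (b:ℝ) / ((n:ℝ) - 1) := by
      field_simp [hcb]
      exact hcb.symm
    have hb0 : (0:ℤ) ≤ b := by
      have : (0:ℝ) ≤ (b:ℝ) := by rw [hcb]; positivity
      exact_mod_cast this
    have hb1 : b < (n:ℤ) - 1 := by
      have : (b:ℝ) < (n:ℝ) - 1 := by
        rw [hcb]
        nlinarith
      exact_mod_cast this
    have hceil : ∀ u : Fin d, ⌈(b * lam u : ℚ) / ((n : ℚ) - 1)⌉ = y u.succ := by
      intro u
      rw [Int.ceil_eq_iff]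
      have hg := hγ u
      have hv : ((((b * lam u : ℚ) / ((n : ℚ) - 1)) : ℚ) : ℝ)
          = (b:ℝ) * (lam u : ℝ) / ((n:ℝ)-1) := by push_cast; ring
      have key : (b:ℝ) * (lam u : ℝ) / ((n:ℝ)-1) = c * (lam u : ℝ) := by
        rw [hcval]; ring
      constructor
      · have hR : ((y u.succ : ℝ)) - 1 < (b:ℝ) * (lam u : ℝ) / ((n:ℝ)-1) := by
          rw [key, hS u]; linarith [hg.2]
        have : (((y u.succ : ℚ) : ℝ)) - 1 < ((((b * lam u : ℚ) / ((n : ℚ) - 1)) : ℚ) : ℝ) := by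
          rw [hv]; push_cast; exact_mod_cast hR
        exact_mod_cast this
      · have hR : (b:ℝ) * (lam u : ℝ) / ((n:ℝ)-1) ≤ (y u.succ : ℝ) := by
          rw [key, hS u]; linarith [hg.1]
        have : ((((b * lam u : ℚ) / ((n : ℚ) - 1)) : ℚ) : ℝ) ≤ (((y u.succ : ℚ) : ℝ)) := by
          rw [hv]; push_cast; exact_mod_cast hR
        exact_mod_cast this
    refine ⟨b, ⟨hb0, hb1, ?_⟩, ?_⟩
    · rw [hp b]
      funext s
      induction s using Fin.cases with
      | zero =>
        simp only [Fin.cons_zero]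
        rw [Finset.sum_congr rfl (fun u _ => hceil u), hb]
        ring
      | succ u =>
        simp only [Fin.cons_succ]
        exact hceil u
    · rintro b' ⟨_, _, hpb'⟩
      have h0' := congrFun hpb' 0
      rw [hp b'] at h0'
      simp only [Fin.cons_zero] at h0'
      have hS' : ∀ u : Fin d, ⌈(b' * lam u : ℚ) / ((n : ℚ) - 1)⌉ = y u.succ := by
        intro u
        have := congrFun hpb' u.succ
        rw [hp b'] at this
        simpa using this
      rw [Finset.sum_congr rfl (fun u _ => hS' u)] at h0'
      rw [hb]
      omega
end

section
/- Let n ≥ 5 and λ = (n-2, 2). Then for integers 1 ≤ i < j ≤ n-2, one has i ≺ j in P(λ) if and only if i ≤ ⌊(n-1)/2⌋, j ≥ ⌊(n-1)/2⌋ + 1, and j - ⌊(n-1)/2⌋ ≤ i. Consequently, the minimal elements of P(λ)∖{0} are {1, …, ⌊(n-1)/2⌋}, the maximal elements are {⌊(n-1)/2⌋+1, …, n-2}, and the element ⌊(n-1)/2⌋ + j lies above exactly {j, j+1, …, ⌊(n-1)/2⌋}. -/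
/-- The lattice point `p(b)` of the fundamental parallelepiped `Π_λ`:
`p(b) = ((Σ_t ⌈bλ_t/(n-1)⌉) - b, ⌈bλ_1/(n-1)⌉, …, ⌈bλ_d/(n-1)⌉) ∈ ℤ^{d+1}`. -/
def pfun (d n : ℕ) (lam : Fin d → ℕ) (b : ℤ) : Fin (d + 1) → ℤ :=
  Fin.cons ((∑ t, ⌈(b * lam t : ℚ) / ((n : ℚ) - 1)⌉) - b)
    (fun t => ⌈(b * lam t : ℚ) / ((n : ℚ) - 1)⌉)

/-- The relation `i ≺ j` of the fundamental parallelepiped poset `P(λ)` on `{0, …, n-2}`: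
`i ≺ j` iff there exists `0 < ℓ < n-1` with `p(i) + p(ℓ) = p(j)`. -/
def precRel (d n : ℕ) (lam : Fin d → ℕ) (i j : ℤ) : Prop :=
  ∃ l : ℤ, 0 < l ∧ l < (n : ℤ) - 1 ∧ pfun d n lam i + pfun d n lam l = pfun d n lam j

/-!
For `λ = (n-2, 2)` and `0 < b < n-1` the coordinates of `p(b)` are `b` and `1` or `2`
(according as `2b ≤ n-1` or not), and the first coordinate is their sum minus `b`. So
`p(i) + p(ℓ) = p(j)` forces `ℓ = j - i`, and then it holds exactly when the last coordinates add
up as `1 + 1 = 2`, i.e. when `2i ≤ n-1`, `2(j-i) ≤ n-1` and `2j > n-1`.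
-/

def parCoord (n k : ℕ) (b : ℤ) : ℤ := ⌈(b * k : ℚ) / ((n : ℚ) - 1)⌉

lemma pfun_eq_cons (d n : ℕ) (lam : Fin d → ℕ) (b : ℤ) :
    pfun d n lam b =
      Matrix.vecCons ((∑ t, parCoord n (lam t) b) - b) (fun t => parCoord n (lam t) b) :=
  rfl

lemma pfun_add_eq_pfun_iff (d n : ℕ) (lam : Fin d → ℕ) (i l j : ℤ) :
    pfun d n lam i + pfun d n lam l = pfun d n lam j ↔
      i + l = j ∧ ∀ t, parCoord n (lam t) i + parCoord n (lam t) l = parCoord n (lam t) j := by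
  rw [pfun_eq_cons, pfun_eq_cons, pfun_eq_cons, Matrix.cons_add_cons, Matrix.vecCons_inj, funext_iff]
  simp only [Pi.add_apply]
  refine and_congr_left fun hcoord => ?_
  have hsum :
      ∑ t, parCoord n (lam t) i + ∑ t, parCoord n (lam t) l = ∑ t, parCoord n (lam t) j := by
    rw [← Finset.sum_add_distrib]
    exact Finset.sum_congr rfl fun t _ => hcoord t
  constructor <;> intro h <;> linarith

lemma parCoord_sub_two {n : ℕ} {b : ℤ} (hb0 : 0 < b) (hb : b < (n : ℤ) - 1) :
    parCoord n (n - 2) b = b := by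
  have hb0' : (0 : ℚ) < b := by exact_mod_cast hb0
  have hb' : (b : ℚ) < (n : ℚ) - 1 := by exact_mod_cast hb
  have hN : (0 : ℚ) < (n : ℚ) - 1 := by linarith
  rw [parCoord, Nat.cast_sub (by omega : 2 ≤ n), Int.ceil_eq_iff, lt_div_iff₀ hN, div_le_iff₀ hN]
  push_cast
  constructor <;> nlinarith

lemma parCoord_two {n : ℕ} {b : ℤ} (hb0 : 0 < b) (hb : b ≤ (n : ℤ) - 1) :
    parCoord n 2 b = if 2 * b ≤ (n : ℤ) - 1 then 1 else 2 := by
  have hb0' : (0 : ℚ) < b := by exact_mod_cast hb0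
  have hb' : (b : ℚ) ≤ (n : ℚ) - 1 := by exact_mod_cast hb
  have hN : (0 : ℚ) < (n : ℚ) - 1 := by linarith
  rw [parCoord]
  split_ifs with h
  · have h' : 2 * (b : ℚ) ≤ (n : ℚ) - 1 := by exact_mod_cast h
    rw [Int.ceil_eq_iff, lt_div_iff₀ hN, div_le_iff₀ hN]
    push_cast
    constructor <;> nlinarith
  · have h' : (n : ℚ) - 1 < 2 * (b : ℚ) := by exact_mod_cast not_le.mp h
    rw [Int.ceil_eq_iff, lt_div_iff₀ hN, div_le_iff₀ hN]
    push_cast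
    constructor <;> nlinarith

lemma pfun_sub_two_two_add_eq_iff {n : ℕ} {i l j : ℤ} (hi0 : 0 < i) (hi : i < (n : ℤ) - 1)
    (hl0 : 0 < l) (hl : l < (n : ℤ) - 1) (hj0 : 0 < j) (hj : j < (n : ℤ) - 1) :
    pfun 2 n ![n - 2, 2] i + pfun 2 n ![n - 2, 2] l = pfun 2 n ![n - 2, 2] j ↔
      i + l = j ∧ 2 * i ≤ (n : ℤ) - 1 ∧ 2 * l ≤ (n : ℤ) - 1 ∧ (n : ℤ) - 1 < 2 * j := by
  rw [pfun_add_eq_pfun_iff, Fin.forall_fin_two]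
  simp only [Matrix.cons_val_zero, Matrix.cons_val_one, Matrix.cons_val_fin_one]
  rw [parCoord_sub_two hi0 hi, parCoord_sub_two hl0 hl, parCoord_sub_two hj0 hj,
    parCoord_two hi0 hi.le, parCoord_two hl0 hl.le, parCoord_two hj0 hj.le]
  split_ifs <;> omega

theorem stmt_4_general (n : ℕ)
    (i j : ℤ) (hi : 1 ≤ i) (hij : i < j) (hj : j ≤ (n : ℤ) - 2) :
    precRel 2 n ![n - 2, 2] i j ↔
      (i ≤ ((n : ℤ) - 1) / 2 ∧ ((n : ℤ) - 1) / 2 + 1 ≤ j ∧ j - ((n : ℤ) - 1) / 2 ≤ i) := by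
  constructor
  · rintro ⟨l, hl0, hl, hsum⟩
    rw [pfun_sub_two_two_add_eq_iff (by omega) (by omega) hl0 hl (by omega) (by omega)] at hsum
    omega
  · intro h
    refine ⟨j - i, by omega, by omega, ?_⟩
    rw [pfun_sub_two_two_add_eq_iff (by omega) (by omega) (by omega) (by omega) (by omega)
      (by omega)]
    omega

/-- Let `n ≥ 5` and `λ = (n-2, 2)`. For integers `1 ≤ i < j ≤ n-2`, one has
`i ≺ j` in `P(λ)` if and only if `i ≤ ⌊(n-1)/2⌋`, `j ≥ ⌊(n-1)/2⌋ + 1`, and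
`j - ⌊(n-1)/2⌋ ≤ i`.  (Consequently the minimal elements of `P(λ)∖{0}` are
`{1, …, ⌊(n-1)/2⌋}`, the maximal elements are `{⌊(n-1)/2⌋+1, …, n-2}`, and the element
`⌊(n-1)/2⌋ + j` lies above exactly `{j, j+1, …, ⌊(n-1)/2⌋}`.) -/
theorem stmt_4 (n : ℕ) (hn : 5 ≤ n)
    (i j : ℤ) (hi : 1 ≤ i) (hij : i < j) (hj : j ≤ (n : ℤ) - 2) :
    precRel 2 n ![n - 2, 2] i j ↔
      (i ≤ ((n : ℤ) - 1) / 2 ∧ ((n : ℤ) - 1) / 2 + 1 ≤ j ∧ j - ((n : ℤ) - 1) / 2 ≤ i) :=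
  stmt_4_general n i j hi hij hj
end

section
/- For integers 0 ≤ i, j < n-1 with i ≠ j, one has i ≺ j in P(λ) if and only if i < j and for every t ∈ {1, …, d}: (s_{t,i} + s_{t,j-i} - s_{t,j})/(n-1) = ⌈ s_{t,i}/(n-1) ⌉ + ⌈ s_{t,j-i}/(n-1) ⌉ - ⌈ s_{t,j}/(n-1) ⌉. -/
section CeilDiv

variable {K : Type*} [Field K] [LinearOrder K] [IsStrictOrderedRing K] [FloorRing K]

lemma ceil_intCast_div_eq_ediv_add_ceil_emod {m : ℤ} (hm : m ≠ 0) (x : ℤ) :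
    ⌈(x : K) / m⌉ = x / m + ⌈((x % m : ℤ) : K) / m⌉ := by
  have hm' : (m : K) ≠ 0 := by exact_mod_cast hm
  conv_lhs => rw [← Int.mul_ediv_add_emod x m]
  push_cast
  rw [add_div, mul_div_cancel_left₀ _ hm', add_comm, Int.ceil_add_intCast, add_comm]

lemma ceil_div_add_ceil_div_eq_iff {m : ℤ} (hm : m ≠ 0) {x y z : ℤ} (hxyz : x + y = z) :
    ⌈(x : K) / m⌉ + ⌈(y : K) / m⌉ = ⌈(z : K) / m⌉ ↔
      ((x % m + y % m - z % m : ℤ) : K) / m =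
        ((⌈((x % m : ℤ) : K) / m⌉ + ⌈((y % m : ℤ) : K) / m⌉
          - ⌈((z % m : ℤ) : K) / m⌉ : ℤ) : K) := by
  have hm' : (m : K) ≠ 0 := by exact_mod_cast hm
  have hcarry : x % m + y % m - z % m = m * (z / m - x / m - y / m) := by
    linear_combination Int.mul_ediv_add_emod x m + Int.mul_ediv_add_emod y m
      - Int.mul_ediv_add_emod z m + hxyz
  rw [ceil_intCast_div_eq_ediv_add_ceil_emod hm x, ceil_intCast_div_eq_ediv_add_ceil_emod hm y,
    ceil_intCast_div_eq_ediv_add_ceil_emod hm z, hcarry, Int.cast_mul, mul_div_cancel_left₀ _ hm',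
    Int.cast_inj]
  omega

end CeilDiv

lemma pfun_add_pfun_eq_iff {d n : ℕ} {lam : Fin d → ℕ} {i l j : ℤ} :
    pfun d n lam i + pfun d n lam l = pfun d n lam j ↔
      l = j - i ∧ ∀ t, ⌈(i * lam t : ℚ) / ((n : ℚ) - 1)⌉
        + ⌈(l * lam t : ℚ) / ((n : ℚ) - 1)⌉ = ⌈(j * lam t : ℚ) / ((n : ℚ) - 1)⌉ := by
  rw [← Fin.cons_self_tail (pfun d n lam i + pfun d n lam l),
    ← Fin.cons_self_tail (pfun d n lam j), Fin.cons_inj, funext_iff]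
  simp only [pfun, Fin.tail, Pi.add_apply, Fin.cons_zero, Fin.cons_succ]
  refine and_congr_left fun hcoord => ?_
  have hsum : ∑ t, ⌈(i * lam t : ℚ) / ((n : ℚ) - 1)⌉ + ∑ t, ⌈(l * lam t : ℚ) / ((n : ℚ) - 1)⌉
      = ∑ t, ⌈(j * lam t : ℚ) / ((n : ℚ) - 1)⌉ := by
    rw [← Finset.sum_add_distrib]
    exact Fintype.sum_congr _ _ hcoord
  omega

theorem stmt_5_general (d n : ℕ) (hn : 3 ≤ n) (lam : Fin d → ℕ)
    (s : Fin d → ℤ → ℤ) (hs : ∀ t b, s t b = (b * lam t) % ((n : ℤ) - 1))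
    (i j : ℤ) (hi0 : 0 ≤ i)
    (hj1 : j < (n : ℤ) - 1) :
    precRel d n lam i j ↔
      i < j ∧ ∀ t : Fin d,
        ((s t i + s t (j - i) - s t j : ℤ) : ℚ) / ((n : ℚ) - 1) =
          ((⌈(s t i : ℚ) / ((n : ℚ) - 1)⌉ + ⌈(s t (j - i) : ℚ) / ((n : ℚ) - 1)⌉
            - ⌈(s t j : ℚ) / ((n : ℚ) - 1)⌉ : ℤ) : ℚ) := by
  have hm : (n : ℤ) - 1 ≠ 0 := by omega
  have hcast : (((n : ℤ) - 1 : ℤ) : ℚ) = (n : ℚ) - 1 := by push_cast; ring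
  have hcoord : ∀ t, (⌈(i * lam t : ℚ) / ((n : ℚ) - 1)⌉
      + ⌈((j - i : ℤ) * lam t : ℚ) / ((n : ℚ) - 1)⌉ = ⌈(j * lam t : ℚ) / ((n : ℚ) - 1)⌉) ↔
      ((s t i + s t (j - i) - s t j : ℤ) : ℚ) / ((n : ℚ) - 1) =
        ((⌈(s t i : ℚ) / ((n : ℚ) - 1)⌉ + ⌈(s t (j - i) : ℚ) / ((n : ℚ) - 1)⌉
          - ⌈(s t j : ℚ) / ((n : ℚ) - 1)⌉ : ℤ) : ℚ) := fun t => by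
    simpa only [hs, ← hcast, Int.cast_mul, Int.cast_natCast] using
      ceil_div_add_ceil_div_eq_iff (K := ℚ) hm (x := i * lam t) (y := (j - i) * lam t)
        (z := j * lam t) (by ring)
  unfold precRel
  simp only [pfun_add_pfun_eq_iff, ← hcoord]
  constructor
  · rintro ⟨l, hl0, -, rfl, hadd⟩
    exact ⟨by omega, hadd⟩
  · rintro ⟨hlt, hadd⟩
    exact ⟨j - i, by omega, by omega, rfl, hadd⟩

/-- For integers `0 ≤ i, j < n-1` with `i ≠ j`, one has `i ≺ j` in `P(λ)` iff
`i < j` and for every `t`: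
`(s_{t,i} + s_{t,j-i} - s_{t,j})/(n-1) = ⌈s_{t,i}/(n-1)⌉ + ⌈s_{t,j-i}/(n-1)⌉ - ⌈s_{t,j}/(n-1)⌉`,
where `s_{t,b}` is the remainder of `b·λ_t` upon division by `n-1`. -/
theorem stmt_5 (d n : ℕ) (hd : 1 ≤ d) (hn : 3 ≤ n) (lam : Fin d → ℕ)
    (hpos : ∀ t, 0 < lam t) (hsum : ∑ t, lam t = n)
    (s : Fin d → ℤ → ℤ) (hs : ∀ t b, s t b = (b * lam t) % ((n : ℤ) - 1))
    (i j : ℤ) (hi0 : 0 ≤ i) (hi1 : i < (n : ℤ) - 1)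
    (hj0 : 0 ≤ j) (hj1 : j < (n : ℤ) - 1) (hij : i ≠ j) :
    precRel d n lam i j ↔
      i < j ∧ ∀ t : Fin d,
        ((s t i + s t (j - i) - s t j : ℤ) : ℚ) / ((n : ℚ) - 1) =
          ((⌈(s t i : ℚ) / ((n : ℚ) - 1)⌉ + ⌈(s t (j - i) : ℚ) / ((n : ℚ) - 1)⌉
            - ⌈(s t j : ℚ) / ((n : ℚ) - 1)⌉ : ℤ) : ℚ) :=
  stmt_5_general d n hn lam s hs i j hi0 hj1
end

section
/- Let x, v ≥ 1 with vx ≥ 3, and let λ be the tuple with v parts all equal to x (so d = v, n = vx). For integers 1 ≤ i, j ≤ vx-2 with i ≠ j, write i = r_i v + p_i and j = r_j v + p_j with 0 ≤ p_i, p_j < v. Then i ≺ j in P(λ) if and only if p_i > p_j and r_i < r_j. In particular, P(λ)∖{0} is isomorphic to the poset on { (r,p) : 0 ≤ r < x, 0 ≤ p < v } ∖ { (0,0), (x-1,v-1) } with (r,p) ≺ (r',p') iff p > p' and r' > r. -/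
section ConstantParts

variable {v x : ℕ}

lemma ceil_mul_div_eq_ediv_add_one {b : ℤ} (hb0 : 1 ≤ b) (hb1 : b ≤ v * x - 1) :
    ⌈(b * (x : ℕ) : ℚ) / (((v * x : ℕ) : ℚ) - 1)⌉ = b / v + 1 := by
  have hx : 1 ≤ (x : ℤ) := by
    rcases Nat.eq_zero_or_pos x with h | h
    · simp [h] at hb1; omega
    · exact_mod_cast h
  have hv : (v : ℤ) ≠ 0 := by rintro h; simp [h] at hb1; omega
  have hdecomp := Int.emod_add_mul_ediv b v
  have hp0 := Int.emod_nonneg b hv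
  have hpv := Int.emod_lt_of_pos b (show (0 : ℤ) < v by omega)
  have hr0 : 0 ≤ b / v := Int.ediv_nonneg (by omega) (by omega)
  set r := b / v
  set p := b % v
  have hrx : r + 1 ≤ x := by nlinarith
  have hlow : r * (v * x - 1) < b * x := by nlinarith
  have hhigh : b * x ≤ (r + 1) * (v * x - 1) := by nlinarith
  have hden : (0 : ℚ) < ((v * x : ℕ) : ℚ) - 1 := by
    have : (2 : ℤ) ≤ v * x := by omega
    push_cast; exact_mod_cast (by linarith : (0 : ℤ) < v * x - 1)
  rw [Int.ceil_eq_iff, lt_div_iff₀ hden, div_le_iff₀ hden]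
  push_cast
  constructor
  · exact_mod_cast (by linarith : (r + 1 - 1) * (v * x - 1) < b * (x : ℤ))
  · exact_mod_cast hhigh

lemma pfun_const_eq {b : ℤ} (hb0 : 1 ≤ b) (hb1 : b ≤ v * x - 1) :
    pfun v (v * x) (fun _ => x) b = Fin.cons (v * (b / v + 1) - b) (fun _ => b / v + 1) := by
  simp only [pfun, ceil_mul_div_eq_ediv_add_one hb0 hb1, Finset.sum_const, Finset.card_univ,
    Fintype.card_fin, nsmul_eq_mul]

lemma pfun_add_pfun_eq_iff_s10 {i l j : ℤ} (hi0 : 1 ≤ i) (hi1 : i ≤ v * x - 1)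
    (hl0 : 1 ≤ l) (hl1 : l ≤ v * x - 1) (hj0 : 1 ≤ j) (hj1 : j ≤ v * x - 1) :
    pfun v (v * x) (fun _ => x) i + pfun v (v * x) (fun _ => x) l = pfun v (v * x) (fun _ => x) j ↔
      i + l = j ∧ i / v + l / v + 1 = j / v := by
  have hv : 0 < v := Nat.pos_of_ne_zero (by rintro rfl; simp at hi1; omega)
  rw [pfun_const_eq hi0 hi1, pfun_const_eq hl0 hl1, pfun_const_eq hj0 hj1]
  change Matrix.vecCons _ _ + Matrix.vecCons _ _ = Matrix.vecCons _ _ ↔ _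
  rw [Matrix.cons_add_cons]
  refine Fin.cons_inj.trans ⟨fun ⟨h0, hc⟩ => ?_, fun ⟨hs, hc⟩ => ⟨?_, ?_⟩⟩
  · have hc' : i / v + 1 + (l / v + 1) = j / v + 1 := congrFun hc ⟨0, hv⟩
    exact ⟨by linear_combination (v : ℤ) * hc' - h0, by linarith⟩
  · linear_combination (v : ℤ) * hc - hs
  · funext; simp only [Pi.add_apply]; linarith

theorem precRel_const_iff {i j : ℤ} (hi0 : 1 ≤ i) (hi1 : i ≤ v * x - 2)
    (hj0 : 1 ≤ j) (hj1 : j ≤ v * x - 2) :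
    precRel v (v * x) (fun _ => x) i j ↔ 0 < j - i ∧ i / v + (j - i) / v + 1 = j / v := by
  constructor
  · rintro ⟨l, hl0, hl1, hsum⟩
    obtain ⟨hs, hc⟩ := (pfun_add_pfun_eq_iff_s10 hi0 (by omega) hl0 (by push_cast at hl1; omega)
      hj0 (by omega)).1 hsum
    obtain rfl : l = j - i := by omega
    exact ⟨hl0, hc⟩
  · rintro ⟨hl0, hc⟩
    refine ⟨j - i, hl0, by push_cast; omega, ?_⟩
    exact (pfun_add_pfun_eq_iff_s10 hi0 (by omega) hl0 (by omega) hj0 (by omega)).2 ⟨by ring, hc⟩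

end ConstantParts

theorem sub_pos_and_ediv_carry_iff {v i j ri rj p1 p2 : ℤ}
    (hdi : i = ri * v + p1) (hp1 : 0 ≤ p1) (hp1' : p1 < v)
    (hdj : j = rj * v + p2) (hp2 : 0 ≤ p2) (hp2' : p2 < v) :
    0 < j - i ∧ i / v + (j - i) / v + 1 = j / v ↔ p2 < p1 ∧ ri < rj := by
  have hv : 0 < v := by omega
  have hi : i / v = ri := (Int.ediv_eq_iff_of_pos hv).2 ⟨by linarith, by linarith⟩
  have hj : j / v = rj := (Int.ediv_eq_iff_of_pos hv).2 ⟨by linarith, by linarith⟩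
  have hcarry : (j - i) / v = rj - ri - 1 ↔ p2 < p1 := by
    rw [Int.ediv_eq_iff_of_pos hv]
    constructor
    · rintro ⟨-, h⟩; linarith
    · intro h; constructor <;> linarith
  have hpos (h : p2 < p1) : 0 < j - i ↔ ri < rj := by
    subst hdi hdj
    constructor
    · intro hji; by_contra! hr; nlinarith
    · intro hr; nlinarith
  rw [hi, hj, show ri + (j - i) / v + 1 = rj ↔ (j - i) / v = rj - ri - 1 by omega, hcarry]
  exact ⟨fun ⟨hji, h⟩ => ⟨h, (hpos h).1 hji⟩, fun ⟨h, hr⟩ => ⟨(hpos h).2 hr, h⟩⟩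

theorem stmt_10_general (x v : ℕ)
    (i j : ℤ) (hi0 : 1 ≤ i) (hi1 : i ≤ (v : ℤ) * x - 2)
    (hj0 : 1 ≤ j) (hj1 : j ≤ (v : ℤ) * x - 2)
    (ri p1 rj p2 : ℤ)
    (hdi : i = ri * v + p1) (hp1 : 0 ≤ p1) (hp1' : p1 < v)
    (hdj : j = rj * v + p2) (hp2 : 0 ≤ p2) (hp2' : p2 < v) :
    precRel v (v * x) (fun _ => x) i j ↔ (p2 < p1 ∧ ri < rj) := by
  rw [precRel_const_iff hi0 hi1 hj0 hj1, sub_pos_and_ediv_carry_iff hdi hp1 hp1' hdj hp2 hp2']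

/-- Let `x, v ≥ 1` with `vx ≥ 3` and let `λ = (x, …, x)` with `v` parts
(so `d = v`, `n = vx`). For integers `1 ≤ i, j ≤ vx-2` with `i ≠ j`, writing
`i = r_i·v + p_i` and `j = r_j·v + p_j` with `0 ≤ p_i, p_j < v`, one has `i ≺ j` in
`P(λ)` if and only if `p_i > p_j` and `r_i < r_j`. (In particular, `P(λ)∖{0}` is
isomorphic to the poset on `{(r,p) : 0 ≤ r < x, 0 ≤ p < v} ∖ {(0,0), (x-1,v-1)}` with
`(r,p) ≺ (r',p')` iff `p > p'` and `r' > r`.) -/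
theorem stmt_10 (x v : ℕ) (hx : 1 ≤ x) (hv : 1 ≤ v) (hvx : 3 ≤ v * x)
    (i j : ℤ) (hi0 : 1 ≤ i) (hi1 : i ≤ (v : ℤ) * x - 2)
    (hj0 : 1 ≤ j) (hj1 : j ≤ (v : ℤ) * x - 2) (hij : i ≠ j)
    (ri p1 rj p2 : ℤ)
    (hdi : i = ri * v + p1) (hp1 : 0 ≤ p1) (hp1' : p1 < v)
    (hdj : j = rj * v + p2) (hp2 : 0 ≤ p2) (hp2' : p2 < v) :
    precRel v (v * x) (fun _ => x) i j ↔ (p2 < p1 ∧ ri < rj) :=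
  stmt_10_general x v i j hi0 hi1 hj0 hj1 ri p1 rj p2 hdi hp1 hp1' hdj hp2 hp2'
end

section
/- Under the Setup below, for every integer 0 ≤ i ≤ n-2 one has s_{1,i} = r_i + x[(v-1)p_i + q_i], where s_{1,i} is the remainder of i·x upon division by n-1. -/
/-! Since `x * M ≡ 1 [MOD x * M - 1]`, multiplying `i = M * r + K` by `x` turns the
mixed-radix digits `(r, K)` into `(K, r)`: `i * x = (r + x * K) + (x * M - 1) * r`.
It remains to check that `r + x * K` is already reduced, which follows from `i ≤ x * M - 2`. -/

namespace Nat

theorem add_mul_le_mul_sub_two {x M r K : ℕ} (hr : r < x) (hK : K < M)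
    (hle : M * r + K ≤ x * M - 2) : r + x * K ≤ x * M - 2 := by
  rcases le_or_gt (K + 2) M with hK2 | hK1
  · have : x * K + 2 * x ≤ x * M := by nlinarith [Nat.mul_le_mul_left x hK2]
    omega
  · obtain rfl : M = K + 1 := by omega
    have hxK : x * (K + 1) = x * K + x := by ring
    rcases Nat.lt_or_ge (r + 1) x with hrx | hrx
    · omega
    · -- `x = r + 1` leaves room only for the degenerate case `r = K = 0`
      obtain rfl : x = r + 1 := by omega
      rw [show (r + 1) * (K + 1) = (K + 1) * r + K + 1 by ring] at hle
      obtain rfl : K = 0 := by omega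
      omega

theorem mul_add_mul_mod_mul_sub_one {x M r K : ℕ} (hr : r < x) (hK : K < M)
    (hle : M * r + K ≤ x * M - 2) : ((M * r + K) * x) % (x * M - 1) = r + x * K := by
  have hshift : (M * r + K) * x = (r + x * K) + (x * M - 1) * r := by
    zify [show 1 ≤ x * M by nlinarith]
    ring
  have hred := add_mul_le_mul_sub_two hr hK hle
  rcases Nat.lt_or_ge (x * M) 2 with hsmall | hlarge
  · obtain rfl : r = 0 := by nlinarith
    obtain rfl : K = 0 := by nlinarith
    simp
  · rw [hshift, Nat.add_mul_mod_self_left, Nat.mod_eq_of_lt (by omega)]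

end Nat

theorem stmt_12_general (a x v : ℕ)
    (n : ℕ) (hn : n = x * ((a + 1) * (v - 1) + 1))
    (i r p q : ℕ) (hi : i ≤ n - 2)
    (hdecomp : i = (n / x) * r + (v - 1) * p + q)
    (hr : r < x) (hpq : (v - 1) * p + q < (a + 1) * (v - 1) + 1) :
    (i * x) % (n - 1) = r + x * ((v - 1) * p + q) := by
  have hnx : n / x = (a + 1) * (v - 1) + 1 := by
    rw [hn]; exact Nat.mul_div_cancel_left _ (by omega)
  rw [hdecomp, hnx, add_assoc] at hi ⊢
  subst hn
  exact Nat.mul_add_mul_mod_mul_sub_one hr hpq hi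

/-- STATEMENT 12 (Setup: `λ` has `ua+v` parts equal to `x` and `v-(u+1)` parts equal to
`ax`, with `3 ≤ a ≤ x`, `0 ≤ u ≤ a-3`, `u+2 ≤ v ≤ min(a-1, a(x-1)/x)`, so
`n = x[(a+1)(v-1)+1]`; every `0 ≤ i ≤ n-2` is uniquely `i = (n/x)·r + (v-1)·p + q` with
`0 ≤ r < x`, `0 ≤ (v-1)p+q < (a+1)(v-1)+1`, `0 ≤ p ≤ a+1`, `0 ≤ q < v-1` unless `p = a+1`
in which case `q = 0`): the remainder `s_{1,i}` of `i·x` upon division by `n-1` equals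
`r + x[(v-1)p + q]`. -/
theorem stmt_12 (a x u v : ℕ) (ha : 3 ≤ a) (hax : a ≤ x)
    (hu : u ≤ a - 3) (hv1 : u + 2 ≤ v) (hv2 : v ≤ a - 1) (hv3 : v * x ≤ a * (x - 1))
    (n : ℕ) (hn : n = x * ((a + 1) * (v - 1) + 1))
    (i r p q : ℕ) (hi : i ≤ n - 2)
    (hdecomp : i = (n / x) * r + (v - 1) * p + q)
    (hr : r < x) (hpq : (v - 1) * p + q < (a + 1) * (v - 1) + 1)
    (hp : p ≤ a + 1) (hq : q < v - 1 ∨ q = 0) (hpa : p = a + 1 → q = 0) :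
    (i * x) % (n - 1) = r + x * ((v - 1) * p + q) :=
  stmt_12_general a x v n hn i r p q hi hdecomp hr hpq
end

section
/- Under the Setup below, for every integer 0 ≤ i ≤ n-2 one has a·x·i - f(i) = (n-1)(a·r_i + p_i); consequently i·a·x ≡ f(i) (mod n-1), and if i ∈ F_k (i.e., k = -⌊f(i)/(n-1)⌋) then s_{2,i} = f(i) + k(n-1), where s_{2,i} is the remainder of i·a·x upon division by n-1. -/
theorem Int.ModEq.emod_eq_add_neg_ediv_mul {m f d : ℤ} (h : m ≡ f [ZMOD d]) :
    m % d = f + -(f / d) * d := by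
  rw [h, Int.emod_def]
  ring

theorem Int.modEq_of_sub_eq_mul {m f d c : ℤ} (h : m - f = d * c) : m ≡ f [ZMOD d] :=
  (Int.modEq_iff_dvd.mpr ⟨c, h⟩).symm

/-- With `n = x((a+1)V + 1)` and `v = V + 1`, the weights `a x · ((a+1)V + 1) = a (n - 1) + a`
and `a x · V = (n - 1) - (x v - 1)` leave remainders `a` and `-(x v - 1)` modulo `n - 1`. -/
theorem mul_sub_eq_mul_of_block_decomp (a x V r p q : ℤ) :
    a * x * (((a + 1) * V + 1) * r + V * p + q) - (a * r - (x * (V + 1) - 1) * p + x * a * q) =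
      (x * ((a + 1) * V + 1) - 1) * (a * r + p) := by
  ring

theorem stmt_13_general (a x u v : ℕ) (hv1 : u + 2 ≤ v)
    (n : ℕ) (hn : n = x * ((a + 1) * (v - 1) + 1))
    (i r p q : ℕ)
    (hdecomp : i = (n / x) * r + (v - 1) * p + q)
    (hr : r < x)
    (f : ℤ) (hf : f = (a : ℤ) * r - ((x : ℤ) * v - 1) * p + (x : ℤ) * a * q) :
    (a : ℤ) * x * i - f = ((n : ℤ) - 1) * ((a : ℤ) * r + p) ∧
      ((i : ℤ) * a * x) ≡ f [ZMOD ((n : ℤ) - 1)] ∧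
      ∀ k : ℤ, k = -(f / ((n : ℤ) - 1)) →
        ((i : ℤ) * a * x) % ((n : ℤ) - 1) = f + k * ((n : ℤ) - 1) := by
  obtain ⟨V, rfl⟩ : ∃ V, v = V + 1 := ⟨v - 1, by omega⟩
  rw [Nat.add_sub_cancel] at hn hdecomp
  have hblock : n / x = (a + 1) * V + 1 := by
    rw [hn, Nat.mul_div_cancel_left _ (Nat.zero_lt_of_lt hr)]
  have key : (a : ℤ) * x * i - f = ((n : ℤ) - 1) * ((a : ℤ) * r + p) := by
    rw [hf, hdecomp, hblock, hn]
    push_cast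
    exact mul_sub_eq_mul_of_block_decomp a x V r p q
  have hmod : (i : ℤ) * a * x ≡ f [ZMOD ((n : ℤ) - 1)] :=
    Int.modEq_of_sub_eq_mul (by rw [← key]; ring)
  exact ⟨key, hmod, fun k hk => hk ▸ hmod.emod_eq_add_neg_ediv_mul⟩

/-- same Setup as Statement 12, with `f(i) := a·r_i - (xv-1)·p_i + x·a·q_i`
and `F_k := {i : k = -⌊f(i)/(n-1)⌋}`: for every `0 ≤ i ≤ n-2` one has
`a·x·i - f(i) = (n-1)(a·r_i + p_i)`; consequently `i·a·x ≡ f(i) (mod n-1)`, and if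
`i ∈ F_k` then `s_{2,i} = f(i) + k(n-1)`, where `s_{2,i}` is the remainder of `i·a·x`
upon division by `n-1`. -/
theorem stmt_13 (a x u v : ℕ) (ha : 3 ≤ a) (hax : a ≤ x)
    (hu : u ≤ a - 3) (hv1 : u + 2 ≤ v) (hv2 : v ≤ a - 1) (hv3 : v * x ≤ a * (x - 1))
    (n : ℕ) (hn : n = x * ((a + 1) * (v - 1) + 1))
    (i r p q : ℕ) (hi : i ≤ n - 2)
    (hdecomp : i = (n / x) * r + (v - 1) * p + q)
    (hr : r < x) (hpq : (v - 1) * p + q < (a + 1) * (v - 1) + 1)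
    (hp : p ≤ a + 1) (hq : q < v - 1 ∨ q = 0) (hpa : p = a + 1 → q = 0)
    (f : ℤ) (hf : f = (a : ℤ) * r - ((x : ℤ) * v - 1) * p + (x : ℤ) * a * q) :
    (a : ℤ) * x * i - f = ((n : ℤ) - 1) * ((a : ℤ) * r + p) ∧
      ((i : ℤ) * a * x) ≡ f [ZMOD ((n : ℤ) - 1)] ∧
      ∀ k : ℤ, k = -(f / ((n : ℤ) - 1)) →
        ((i : ℤ) * a * x) % ((n : ℤ) - 1) = f + k * ((n : ℤ) - 1) :=
  stmt_13_general a x u v hv1 n hn i r p q hdecomp hr f hf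
end

section
/- Under the Setup below, for every integer 0 ≤ i ≤ n-2 one has -2(n-1) < f(i) < n-1; consequently -⌊f(i)/(n-1)⌋ ∈ {0, 1, 2}, i.e., {0, 1, …, n-2} is the disjoint union F_0 ⊎ F_1 ⊎ F_2. -/
/-!
Write `N = x((a+1)(v-1)+1)`, so that `N - 1 = xav - xa + xv - 1`. The extreme values of
`f = a r - (xv-1) p + x a q` over the admissible ranges of `r`, `p`, `q` are attained at the
corners `r = x-1, p = 0, q = v-2` and `r = 0, p = a+1, q = 0`; they fall short of `N - 1` by
`xv + a - 1` and exceed `-2(N-1)` by `xa(v-2) + xv + a - 1`, both positive once `x ≥ 1` and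
`v ≥ 2`. The claim about `-⌊f/(N-1)⌋` follows from these two bounds alone.
-/

theorem Int.neg_ediv_eq_zero_or_one_or_two {f m : ℤ} (hlo : -2 * m < f) (hhi : f < m) :
    -(f / m) = 0 ∨ -(f / m) = 1 ∨ -(f / m) = 2 := by
  have hm : 0 < m := by omega
  have hge : -2 ≤ f / m := by rw [Int.le_ediv_iff_mul_le hm]; omega
  have hlt : f / m < 1 := by rw [Int.ediv_lt_iff_lt_mul hm]; omega
  omega

def weight (a x v r p q : ℤ) : ℤ := a * r - (x * v - 1) * p + x * a * q

section Bounds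

variable {a x v r p q : ℤ}

theorem weight_lt (ha : 0 ≤ a) (hx : 1 ≤ x) (hv : 2 ≤ v)
    (hr : r < x) (hp : 0 ≤ p) (hq : q ≤ v - 2) :
    weight a x v r p q < x * ((a + 1) * (v - 1) + 1) - 1 := by
  have hxv : 2 ≤ x * v := by nlinarith
  have hr' : a * r ≤ a * (x - 1) := mul_le_mul_of_nonneg_left (by omega) ha
  have hp' : 0 ≤ (x * v - 1) * p := mul_nonneg (by omega) hp
  have hq' : x * a * q ≤ x * a * (v - 2) := mul_le_mul_of_nonneg_left hq (by positivity)
  calc weight a x v r p q ≤ a * (x - 1) + x * a * (v - 2) := by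
        unfold weight; linarith
    _ = x * ((a + 1) * (v - 1) + 1) - 1 - (x * v + a - 1) := by ring
    _ < x * ((a + 1) * (v - 1) + 1) - 1 := by omega

theorem neg_two_mul_lt_weight (ha : 0 ≤ a) (hx : 1 ≤ x) (hv : 2 ≤ v)
    (hr : 0 ≤ r) (hp : p ≤ a + 1) (hq : 0 ≤ q) :
    -2 * (x * ((a + 1) * (v - 1) + 1) - 1) < weight a x v r p q := by
  have hxv : 2 ≤ x * v := by nlinarith
  have hr' : 0 ≤ a * r := mul_nonneg ha hr
  have hp' : (x * v - 1) * p ≤ (x * v - 1) * (a + 1) := mul_le_mul_of_nonneg_left hp (by omega)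
  have hq' : 0 ≤ x * a * q := mul_nonneg (by positivity) hq
  have hxa : 0 ≤ x * a * (v - 2) := mul_nonneg (by positivity) (by omega)
  calc -2 * (x * ((a + 1) * (v - 1) + 1) - 1)
        = -((x * v - 1) * (a + 1)) - (x * a * (v - 2) + x * v + a - 1) := by ring
    _ < -((x * v - 1) * (a + 1)) := by omega
    _ ≤ weight a x v r p q := by unfold weight; linarith

end Bounds

theorem stmt_15_general (a x u v : ℕ) (hv1 : u + 2 ≤ v)
    (n : ℕ) (hn : n = x * ((a + 1) * (v - 1) + 1))
    (r p q : ℤ)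
    (hr : 0 ≤ r ∧ r < (x : ℤ))
    (hp : 0 ≤ p ∧ p ≤ (a : ℤ) + 1) (hq : 0 ≤ q ∧ q < (v : ℤ) - 1 ∨ q = 0)
    (f : ℤ) (hf : f = (a : ℤ) * r - ((x : ℤ) * v - 1) * p + (x : ℤ) * a * q) :
    (-2 * ((n : ℤ) - 1) < f ∧ f < (n : ℤ) - 1) ∧
      (-(f / ((n : ℤ) - 1)) = 0 ∨ -(f / ((n : ℤ) - 1)) = 1 ∨ -(f / ((n : ℤ) - 1)) = 2) := by
  have hv : (2 : ℤ) ≤ v := by omega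
  have hx : (1 : ℤ) ≤ x := by omega
  have hq' : 0 ≤ q ∧ q ≤ (v : ℤ) - 2 := by omega
  have hnZ : (n : ℤ) = x * ((a + 1) * (v - 1) + 1) := by
    subst hn; push_cast [Nat.cast_sub (by omega : 1 ≤ v)]; ring
  have hlo := neg_two_mul_lt_weight (Nat.cast_nonneg a) hx hv hr.1 hp.2 hq'.1
  have hhi := weight_lt (Nat.cast_nonneg a) hx hv hr.2 hp.1 hq'.2
  rw [hnZ, hf]
  exact ⟨⟨hlo, hhi⟩, Int.neg_ediv_eq_zero_or_one_or_two hlo hhi⟩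

/-- Setup as in Statement 12, with `f(i) := a·r_i - (xv-1)·p_i + x·a·q_i`:
for every `0 ≤ i ≤ n-2` one has `-2(n-1) < f(i) < n-1`; consequently
`-⌊f(i)/(n-1)⌋ ∈ {0, 1, 2}`, i.e. `{0, …, n-2}` is the disjoint union `F_0 ⊎ F_1 ⊎ F_2`. -/
theorem stmt_15 (a x u v : ℕ) (ha : 3 ≤ a) (hax : a ≤ x)
    (hu : u ≤ a - 3) (hv1 : u + 2 ≤ v) (hv2 : v ≤ a - 1) (hv3 : v * x ≤ a * (x - 1))
    (n : ℕ) (hn : n = x * ((a + 1) * (v - 1) + 1))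
    (i : ℤ) (hi0 : 0 ≤ i) (hi1 : i ≤ (n : ℤ) - 2)
    (r p q : ℤ)
    (hdecomp : i = ((n : ℤ) / x) * r + ((v : ℤ) - 1) * p + q)
    (hr : 0 ≤ r ∧ r < (x : ℤ))
    (hpq : 0 ≤ ((v : ℤ) - 1) * p + q ∧
      ((v : ℤ) - 1) * p + q < ((a : ℤ) + 1) * ((v : ℤ) - 1) + 1)
    (hp : 0 ≤ p ∧ p ≤ (a : ℤ) + 1) (hq : 0 ≤ q ∧ q < (v : ℤ) - 1 ∨ q = 0)
    (hpa : p = (a : ℤ) + 1 → q = 0)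
    (f : ℤ) (hf : f = (a : ℤ) * r - ((x : ℤ) * v - 1) * p + (x : ℤ) * a * q) :
    (-2 * ((n : ℤ) - 1) < f ∧ f < (n : ℤ) - 1) ∧
      (-(f / ((n : ℤ) - 1)) = 0 ∨ -(f / ((n : ℤ) - 1)) = 1 ∨ -(f / ((n : ℤ) - 1)) = 2) :=
  stmt_15_general a x u v hv1 n hn r p q hr hp hq f hf
end

section
/- Let 3 ≤ a ≤ x, set n = x(a+2) (the case v = 2 of the Setup, with λ = (x, x, ax)), and assume gcd(a, n-1) = 1 (note gcd(x, n-1) = 1 holds automatically). For 0 ≤ i ≤ n-2 write i = (a+2)·r_i + p_i with 0 ≤ p_i < a+2 and set f(i) := a·r_i - (2x-1)·p_i. Then for every 1 ≤ i ≤ n-2: ⌊f(i)/(n-1)⌋ + ⌊f(n-1-i)/(n-1)⌋ = -2; equivalently, i ∈ F_s if and only if n-1-i ∈ F_{2-s}, where F_k := { i : k = -⌊f(i)/(n-1)⌋ }. -/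
/-!
Reflecting `i ↦ n - 1 - i` reflects both base-`(a+2)` digits of `i`, `r ↦ x - 1 - r` and
`p ↦ a + 1 - p`, and this turns `f(i) + f(n-1-i)` into the constant `-(n-1)`. Two integers with
sum `-(n-1)` have floors (after division by `n - 1`) summing to `-2` unless `n - 1` divides them;
and `n - 1 ∣ f(i)` would force `n - 1 ∣ a·i`, since `a·i = (a+2)·f(i) + 2(n-1)·p_i`, hence
`n - 1 ∣ i` by coprimality, which is impossible for `0 < i < n - 1`.
-/

namespace Int

theorem mul_sub_one_sub_ediv_emod {d : ℤ} (hd : 0 < d) (x i : ℤ) :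
    (d * x - 1 - i) / d = x - 1 - i / d ∧ (d * x - 1 - i) % d = d - 1 - i % d := by
  rw [Int.ediv_emod_unique hd]
  refine ⟨?_, ?_, ?_⟩
  · linear_combination -(Int.mul_ediv_add_emod i d)
  · linarith [Int.emod_lt_of_pos i hd]
  · linarith [Int.emod_nonneg i hd.ne']

theorem ediv_add_ediv_of_add_eq_neg {u v N : ℤ} (hN : 0 < N) (huv : u + v = -N)
    (hu : ¬ N ∣ u) : u / N + v / N = -2 := by
  have hv : v = -u + (-1) * N := by linear_combination huv
  rw [hv, Int.add_mul_ediv_right _ _ hN.ne', Int.neg_ediv, if_neg hu, Int.sign_eq_one_of_pos hN]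
  ring

end Int

def digitWeight (a x m : ℤ) : ℤ :=
  a * (m / (a + 2)) - (2 * x - 1) * (m % (a + 2))

section digitWeight

variable {a x : ℤ}

theorem digitWeight_add_digitWeight_reflect (ha : 0 < a + 2) (i : ℤ) :
    digitWeight a x i + digitWeight a x (x * (a + 2) - 1 - i) = -(x * (a + 2) - 1) := by
  obtain ⟨hr, hp⟩ := Int.mul_sub_one_sub_ediv_emod ha x i
  rw [digitWeight, digitWeight, mul_comm x, hr, hp]
  ring

theorem mul_eq_add_mul_digitWeight (a x i : ℤ) :
    a * i = (a + 2) * digitWeight a x i + 2 * (x * (a + 2) - 1) * (i % (a + 2)) := by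
  rw [digitWeight]
  linear_combination a * (Int.mul_ediv_add_emod i (a + 2)).symm

theorem not_dvd_digitWeight (hcop : IsCoprime a (x * (a + 2) - 1)) {i : ℤ} (hi0 : 0 < i)
    (hi : i < x * (a + 2) - 1) : ¬ x * (a + 2) - 1 ∣ digitWeight a x i := by
  intro hdvd
  have hai : x * (a + 2) - 1 ∣ a * i := by
    rw [mul_eq_add_mul_digitWeight a x i]
    exact dvd_add (hdvd.mul_left _) (Dvd.intro (2 * (i % (a + 2))) (by ring))
  exact absurd (Int.le_of_dvd hi0 (hcop.symm.dvd_of_dvd_mul_left hai)) (not_le.mpr hi)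

end digitWeight

theorem stmt_17_general (a x : ℤ) (ha : 3 ≤ a)
    (n : ℤ) (hn : n = x * (a + 2)) (hcop : IsCoprime a (n - 1))
    (f : ℤ → ℤ) (hf : ∀ m : ℤ, f m = a * (m / (a + 2)) - (2 * x - 1) * (m % (a + 2)))
    (i : ℤ) (hi1 : 1 ≤ i) (hi2 : i ≤ n - 2) :
    f i / (n - 1) + f (n - 1 - i) / (n - 1) = -2 ∧
      ∀ s : ℤ, (s = -(f i / (n - 1)) ↔ 2 - s = -(f (n - 1 - i) / (n - 1))) := by
  obtain rfl : f = digitWeight a x := funext hf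
  subst hn
  have hsum := Int.ediv_add_ediv_of_add_eq_neg (N := x * (a + 2) - 1) (by linarith)
    (digitWeight_add_digitWeight_reflect (by linarith) i)
    (not_dvd_digitWeight hcop (by linarith) (by linarith))
  exact ⟨hsum, fun s => by omega⟩

/-- Let `3 ≤ a ≤ x`, `n = x(a+2)` (the case `v = 2` of the Setup, with
`λ = (x, x, ax)`), and assume `gcd(a, n-1) = 1` (note `gcd(x, n-1) = 1` automatically).
For `0 ≤ i ≤ n-2` write `i = (a+2)·r_i + p_i` with `0 ≤ p_i < a+2` and set
`f(i) := a·r_i - (2x-1)·p_i`. Then for every `1 ≤ i ≤ n-2`: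
`⌊f(i)/(n-1)⌋ + ⌊f(n-1-i)/(n-1)⌋ = -2`; equivalently `i ∈ F_s ↔ n-1-i ∈ F_{2-s}`,
where `F_k := {i : k = -⌊f(i)/(n-1)⌋}`. -/
theorem stmt_17 (a x : ℤ) (ha : 3 ≤ a) (hax : a ≤ x)
    (n : ℤ) (hn : n = x * (a + 2)) (hcop : IsCoprime a (n - 1))
    (f : ℤ → ℤ) (hf : ∀ m : ℤ, f m = a * (m / (a + 2)) - (2 * x - 1) * (m % (a + 2)))
    (i : ℤ) (hi1 : 1 ≤ i) (hi2 : i ≤ n - 2) :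
    f i / (n - 1) + f (n - 1 - i) / (n - 1) = -2 ∧
      ∀ s : ℤ, (s = -(f i / (n - 1)) ↔ 2 - s = -(f (n - 1 - i) / (n - 1))) :=
  stmt_17_general a x ha n hn hcop f hf i hi1 hi2
end
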